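/- Let r ≥ 2 and let (P,ℒ) be an r-uniform linear system with 2-packing number ν₂ = 4 and maximum degree Δ = 3. Then (r+1)·τ ≤ |P| + |ℒ| (equivalently, τ ≤ (|P| + |ℒ|)/(r+1)), where τ is the transversal number. -/

import Mathlib

open Finset

/-- `(P, L)` is a linear system: lines are nonempty subsets of the point set `P`,
and any two distinct lines share at most one point. -/
def IsLinearSystem {α : Type*} [DecidableEq α] (P : Finset α) (L : Finset (Finset α)) : Prop :=
  (∀ l ∈ L, l.Nonempty) ∧ (∀ l ∈ L, l ⊆ P) ∧
    ∀ l ∈ L, ∀ l' ∈ L, l ≠ l' → (l ∩ l').card ≤ 1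

/-- `T` is a transversal of the linear system `(P, L)`. -/
def IsTransversal {α : Type*} [DecidableEq α] (P : Finset α) (L : Finset (Finset α))
    (T : Finset α) : Prop :=
  T ⊆ P ∧ ∀ l ∈ L, (T ∩ l).Nonempty

/-- The transversal number `τ` of `(P, L)`. -/
noncomputable def tau {α : Type*} [DecidableEq α] (P : Finset α) (L : Finset (Finset α)) : ℕ :=
  sInf {n | ∃ T : Finset α, IsTransversal P L T ∧ T.card = n}

/-- `R` is a 2-packing of `L`: no three distinct lines of `R` have a common point. -/
def Is2Packing {α : Type*} [DecidableEq α] (L R : Finset (Finset α)) : Prop :=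
  R ⊆ L ∧ ∀ l₁ ∈ R, ∀ l₂ ∈ R, ∀ l₃ ∈ R,
    l₁ ≠ l₂ → l₁ ≠ l₃ → l₂ ≠ l₃ → l₁ ∩ l₂ ∩ l₃ = ∅

/-- The 2-packing number `ν₂` of `(P, L)`. -/
noncomputable def nu2 {α : Type*} [DecidableEq α] (L : Finset (Finset α)) : ℕ :=
  sSup {n | ∃ R : Finset (Finset α), Is2Packing L R ∧ R.card = n}

/-- The degree of a point `p`: the number of lines containing `p`. -/
def degree {α : Type*} [DecidableEq α] (L : Finset (Finset α)) (p : α) : ℕ :=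
  (L.filter fun l => p ∈ l).card

/-- The maximum degree `Δ` over all points of `P`. -/
def maxDegree {α : Type*} [DecidableEq α] (P : Finset α) (L : Finset (Finset α)) : ℕ :=
  P.sup (degree L)

/-!
Fix a point `q` of degree 3, on the lines `m₁ m₂ m₃`, and call the lines missing `q` far.
Adding `q` to a set of points meeting every far line gives a transversal. Counting the points of
`m₁ ∪ m₂ ∪ m₃` and of two far lines `u, v` gives `5r ≤ |P| + 8 + |u ∩ v|`, the three lines
through `q` are never all in a 2-packing, so `|L| ≥ 5`, and `r|L| ≤ 3|P|` handles small `r`.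
Hence it suffices to meet all far lines with two points, or with three points when there are at
least `5 + |u ∩ v|` far lines.

Such a cover comes from `ν₂ ≤ 4`: there are no five lines without three concurrent ones. If two
far lines `u, v` are disjoint, every other far line meets `u` and `v` on lines through `q`, so any
three of them are concurrent, and only three lines pass through their common point. Otherwise the
far lines pairwise meet; take a triangle of far lines. Two of its vertices lie on lines through
`q` (else two such lines avoiding the vertices form a 2-packing with the triangle), so they lie on
no further far line; and at most two far lines avoid all three vertices, since three of them would
form a triangle with no vertex on a line through `q`.
-/

section

variable {α : Type*}

structure IsTriangle (l₁ l₂ l₃ : Finset α) (a b c : α) : Prop where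
  a_mem₁ : a ∈ l₁
  a_mem₂ : a ∈ l₂
  b_mem₁ : b ∈ l₁
  b_mem₃ : b ∈ l₃
  c_mem₂ : c ∈ l₂
  c_mem₃ : c ∈ l₃
  a_not_mem : a ∉ l₃
  b_not_mem : b ∉ l₂
  c_not_mem : c ∉ l₁

namespace IsTriangle

variable {l₁ l₂ l₃ : Finset α} {a b c : α}

lemma swap (ht : IsTriangle l₁ l₂ l₃ a b c) : IsTriangle l₂ l₁ l₃ a c b :=
  ⟨ht.a_mem₂, ht.a_mem₁, ht.c_mem₂, ht.c_mem₃, ht.b_mem₁, ht.b_mem₃, ht.a_not_mem, ht.c_not_mem,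
    ht.b_not_mem⟩

lemma rotate (ht : IsTriangle l₁ l₂ l₃ a b c) : IsTriangle l₃ l₁ l₂ b c a :=
  ⟨ht.b_mem₃, ht.b_mem₁, ht.c_mem₃, ht.c_mem₂, ht.a_mem₁, ht.a_mem₂, ht.b_not_mem, ht.c_not_mem,
    ht.a_not_mem⟩

lemma ne₁₂ (ht : IsTriangle l₁ l₂ l₃ a b c) : l₁ ≠ l₂ :=
  (ne_of_mem_of_not_mem' ht.c_mem₂ ht.c_not_mem).symm

lemma ne₁₃ (ht : IsTriangle l₁ l₂ l₃ a b c) : l₁ ≠ l₃ :=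
  ne_of_mem_of_not_mem' ht.a_mem₁ ht.a_not_mem

lemma ne₂₃ (ht : IsTriangle l₁ l₂ l₃ a b c) : l₂ ≠ l₃ :=
  ne_of_mem_of_not_mem' ht.a_mem₂ ht.a_not_mem

end IsTriangle

variable [DecidableEq α]

section LinearSystem

variable {P : Finset α} {L : Finset (Finset α)}

lemma eq_of_mem_of_mem (hlin : ∀ l ∈ L, ∀ l' ∈ L, l ≠ l' → (l ∩ l').card ≤ 1)
    {l l' : Finset α} (hl : l ∈ L) (hl' : l' ∈ L) (hne : l ≠ l') {x y : α}
    (hx : x ∈ l) (hx' : x ∈ l') (hy : y ∈ l) (hy' : y ∈ l') : x = y :=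
  card_le_one.1 (hlin l hl l' hl' hne) x (mem_inter.2 ⟨hx, hx'⟩) y (mem_inter.2 ⟨hy, hy'⟩)

lemma eq_or_eq_or_eq_of_degree_le_three {x : α} (hdeg : degree L x ≤ 3)
    {A B D l : Finset α} (hA : A ∈ L) (hB : B ∈ L) (hD : D ∈ L) (hl : l ∈ L)
    (hAB : A ≠ B) (hAD : A ≠ D) (hBD : B ≠ D)
    (hxA : x ∈ A) (hxB : x ∈ B) (hxD : x ∈ D) (hxl : x ∈ l) : l = A ∨ l = B ∨ l = D := by
  by_contra! h
  have hsub : ({l, A, B, D} : Finset (Finset α)) ⊆ L.filter (x ∈ ·) := by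
    intro m hm
    simp only [mem_insert, mem_singleton] at hm
    rcases hm with rfl | rfl | rfl | rfl <;> simp [*]
  have hcard : ({l, A, B, D} : Finset (Finset α)).card = 4 := by
    rw [card_insert_of_notMem (by simp [h.1, h.2.1, h.2.2]),
      card_insert_of_notMem (by simp [hAB, hAD]), card_insert_of_notMem (by simp [hBD]),
      card_singleton]
  have := card_le_card hsub
  unfold degree at hdeg
  omega

lemma degree_le_maxDegree (hsub : ∀ l ∈ L, l ⊆ P) (x : α) : degree L x ≤ maxDegree P L := by
  by_cases hx : x ∈ P
  · exact le_sup hx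
  · have : L.filter (x ∈ ·) = ∅ := filter_eq_empty_iff.2 fun l hl hxl => hx (hsub l hl hxl)
    simp [degree, this]

lemma card_mul_le_mul_card {r d : ℕ} (hsub : ∀ l ∈ L, l ⊆ P) (hunif : ∀ l ∈ L, l.card = r)
    (hdeg : ∀ x ∈ P, degree L x ≤ d) : L.card * r ≤ P.card * d :=
  card_mul_le_card_mul (fun l x => x ∈ l)
    (fun l hl => by
      rw [bipartiteAbove, filter_mem_eq_inter, inter_eq_right.2 (hsub l hl), hunif l hl])
    (fun x hx => hdeg x hx)

lemma bddAbove_packing_cards :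
    BddAbove {n | ∃ R : Finset (Finset α), Is2Packing L R ∧ R.card = n} :=
  ⟨L.card, fun _ ⟨_, hR, hn⟩ => hn ▸ card_le_card hR.1⟩

lemma card_le_nu2 {R : Finset (Finset α)} (hR : Is2Packing L R) : R.card ≤ nu2 L :=
  le_csSup bddAbove_packing_cards ⟨R, hR, rfl⟩

lemma nu2_lt_card_of_concurrent {x : α} {A B D : Finset α} (hA : A ∈ L) (hB : B ∈ L)
    (hD : D ∈ L) (hAB : A ≠ B) (hAD : A ≠ D) (hBD : B ≠ D)
    (hxA : x ∈ A) (hxB : x ∈ B) (hxD : x ∈ D) : nu2 L < L.card := by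
  obtain ⟨R, hR, hcard⟩ : nu2 L ∈ {n | ∃ R : Finset (Finset α), Is2Packing L R ∧ R.card = n} :=
    Nat.sSup_mem ⟨0, ∅, ⟨empty_subset _, by simp⟩, rfl⟩ bddAbove_packing_cards
  obtain ⟨l, hl, hlR⟩ : ∃ l ∈ L, l ∉ R := by
    by_contra! h
    have := hR.2 A (h A hA) B (h B hB) D (h D hD) hAB hAD hBD
    exact ne_empty_of_mem (mem_inter.2 ⟨mem_inter.2 ⟨hxA, hxB⟩, hxD⟩) this
  rw [← hcard]
  exact card_lt_card ⟨hR.1, fun h => hlR (h hl)⟩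

lemma tau_le_card {T : Finset α} (hT : IsTransversal P L T) : tau P L ≤ T.card :=
  Nat.sInf_le ⟨T, hT, rfl⟩

lemma is2Packing_of_pair_triple {A B D E F : Finset α} (hsub : {A, B, D, E, F} ⊆ L)
    (hAB : ∀ x ∈ A, x ∈ B → x ∉ D ∧ x ∉ E ∧ x ∉ F)
    (hDE : ∀ x ∈ D, x ∈ E → x ∉ A ∧ x ∉ B ∧ x ∉ F)
    (hDF : ∀ x ∈ D, x ∈ F → x ∉ A ∧ x ∉ B)
    (hEF : ∀ x ∈ E, x ∈ F → x ∉ A ∧ x ∉ B) : Is2Packing L {A, B, D, E, F} := by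
  refine ⟨hsub, fun l₁ h₁ l₂ h₂ l₃ h₃ h₁₂ h₁₃ h₂₃ => eq_empty_of_forall_notMem fun x hx => ?_⟩
  simp only [mem_inter] at hx
  obtain ⟨⟨hx₁, hx₂⟩, hx₃⟩ := hx
  simp only [mem_insert, mem_singleton] at h₁ h₂ h₃
  rcases h₁ with rfl | rfl | rfl | rfl | rfl <;> rcases h₂ with rfl | rfl | rfl | rfl | rfl <;>
    rcases h₃ with rfl | rfl | rfl | rfl | rfl <;> simp_all

end LinearSystem

structure PencilSetting (L : Finset (Finset α)) (q : α) (m₁ m₂ m₃ : Finset α) : Prop where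
  nonempty : ∀ l ∈ L, l.Nonempty
  linear : ∀ l ∈ L, ∀ l' ∈ L, l ≠ l' → (l ∩ l').card ≤ 1
  degree_le : ∀ x, degree L x ≤ 3
  card_le_four : ∀ R, Is2Packing L R → R.card ≤ 4
  mem₁ : m₁ ∈ L
  mem₂ : m₂ ∈ L
  mem₃ : m₃ ∈ L
  q_mem₁ : q ∈ m₁
  q_mem₂ : q ∈ m₂
  q_mem₃ : q ∈ m₃
  ne₁₂ : m₁ ≠ m₂
  ne₁₃ : m₁ ≠ m₃
  ne₂₃ : m₂ ≠ m₃

def OnPencil (L : Finset (Finset α)) (q x : α) : Prop := ∃ m ∈ L, q ∈ m ∧ x ∈ m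

def FarCover (L : Finset (Finset α)) (q : α) (T : Finset α) : Prop :=
  ∀ l ∈ L, q ∉ l → ∃ x ∈ T, x ∈ l

def HasSmallFarCover (L : Finset (Finset α)) (q : α) : Prop :=
  ∃ T, FarCover L q T ∧ (T.card ≤ 2 ∨ T.card ≤ 3 ∧ ∃ u ∈ L, ∃ v ∈ L, q ∉ u ∧ q ∉ v ∧ u ≠ v ∧
    (u ∩ v).card + 5 ≤ (L.filter (q ∉ ·)).card)

namespace HasSmallFarCover

variable {L : Finset (Finset α)} {q : α}

lemma of_two {s t : α} (h : ∀ l ∈ L, q ∉ l → s ∈ l ∨ t ∈ l) : HasSmallFarCover L q :=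
  ⟨{s, t}, fun l hl hql => by simpa using h l hl hql, Or.inl card_le_two⟩

lemma of_three {s t w : α} (h : ∀ l ∈ L, q ∉ l → s ∈ l ∨ t ∈ l ∨ w ∈ l) {u v : Finset α}
    (hu : u ∈ L) (hv : v ∈ L) (hqu : q ∉ u) (hqv : q ∉ v) (huv : u ≠ v)
    (hcard : (u ∩ v).card + 5 ≤ (L.filter (q ∉ ·)).card) : HasSmallFarCover L q :=
  ⟨{s, t, w}, fun l hl hql => by simpa using h l hl hql,
    Or.inr ⟨card_le_three, u, hu, v, hv, hqu, hqv, huv, hcard⟩⟩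

end HasSmallFarCover

namespace PencilSetting

variable {P : Finset α} {L : Finset (Finset α)} {q : α} {m₁ m₂ m₃ l₁ l₂ l₃ u v : Finset α}
  {a b c : α} {r : ℕ}

lemma exists_two_not_mem (S : PencilSetting L q m₁ m₂ m₃) {y : α} (hy : y ≠ q) :
    ∃ m ∈ L, ∃ m' ∈ L, q ∈ m ∧ q ∈ m' ∧ m ≠ m' ∧ y ∉ m ∧ y ∉ m' := by
  have eq_q {m m'} (hm : m ∈ L) (hm' : m' ∈ L) (hne : m ≠ m') (hqm : q ∈ m) (hqm' : q ∈ m')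
      (hym : y ∈ m) (hym' : y ∈ m') : False :=
    hy (eq_of_mem_of_mem S.linear hm hm' hne hym hym' hqm hqm')
  by_cases h₁ : y ∈ m₁
  · exact ⟨m₂, S.mem₂, m₃, S.mem₃, S.q_mem₂, S.q_mem₃, S.ne₂₃,
      eq_q S.mem₁ S.mem₂ S.ne₁₂ S.q_mem₁ S.q_mem₂ h₁,
      eq_q S.mem₁ S.mem₃ S.ne₁₃ S.q_mem₁ S.q_mem₃ h₁⟩
  by_cases h₂ : y ∈ m₂
  · exact ⟨m₁, S.mem₁, m₃, S.mem₃, S.q_mem₁, S.q_mem₃, S.ne₁₃, h₁,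
      eq_q S.mem₂ S.mem₃ S.ne₂₃ S.q_mem₂ S.q_mem₃ h₂⟩
  · exact ⟨m₁, S.mem₁, m₂, S.mem₂, S.q_mem₁, S.q_mem₂, S.ne₁₂, h₁, h₂⟩

lemma false_of_pair_triple (S : PencilSetting L q m₁ m₂ m₃) {A B D E F : Finset α}
    (hA : A ∈ L) (hB : B ∈ L) (hD : D ∈ L) (hE : E ∈ L) (hF : F ∈ L)
    (hAB : A ≠ B) (hAD : A ≠ D) (hAE : A ≠ E) (hAF : A ≠ F) (hBD : B ≠ D) (hBE : B ≠ E)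
    (hBF : B ≠ F) (hDE : D ≠ E) (hDF : D ≠ F) (hEF : E ≠ F)
    (hxAB : ∀ x ∈ A, x ∈ B → x ∉ D ∧ x ∉ E ∧ x ∉ F)
    (hxDE : ∀ x ∈ D, x ∈ E → x ∉ A ∧ x ∉ B ∧ x ∉ F)
    (hxDF : ∀ x ∈ D, x ∈ F → x ∉ A ∧ x ∉ B)
    (hxEF : ∀ x ∈ E, x ∈ F → x ∉ A ∧ x ∉ B) : False := by
  have hsub : {A, B, D, E, F} ⊆ L := by
    intro l hl
    simp only [mem_insert, mem_singleton] at hl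
    rcases hl with rfl | rfl | rfl | rfl | rfl <;> assumption
  have h4 := S.card_le_four _ (is2Packing_of_pair_triple hsub hxAB hxDE hxDF hxEF)
  rw [card_insert_of_notMem (by simp [hAB, hAD, hAE, hAF]),
    card_insert_of_notMem (by simp [hBD, hBE, hBF]), card_insert_of_notMem (by simp [hDE, hDF]),
    card_insert_of_notMem (by simp [hEF]), card_singleton] at h4
  omega

lemma false_of_triangle_pair (S : PencilSetting L q m₁ m₂ m₃) (ht : IsTriangle l₁ l₂ l₃ a b c)
    (h₁ : l₁ ∈ L) (h₂ : l₂ ∈ L) (h₃ : l₃ ∈ L) {A B : Finset α} (hA : A ∈ L) (hB : B ∈ L)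
    (hAB : A ≠ B) (hvA : a ∉ A ∧ b ∉ A ∧ c ∉ A) (hvB : a ∉ B ∧ b ∉ B ∧ c ∉ B)
    (hmeet : ∀ x ∈ A, x ∈ B → x ∉ l₁ ∧ x ∉ l₂ ∧ x ∉ l₃) : False := by
  refine S.false_of_pair_triple hA hB h₁ h₂ h₃ hAB (ne_of_mem_of_not_mem' ht.a_mem₁ hvA.1).symm
    (ne_of_mem_of_not_mem' ht.a_mem₂ hvA.1).symm (ne_of_mem_of_not_mem' ht.b_mem₃ hvA.2.1).symm
    (ne_of_mem_of_not_mem' ht.a_mem₁ hvB.1).symm (ne_of_mem_of_not_mem' ht.a_mem₂ hvB.1).symm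
    (ne_of_mem_of_not_mem' ht.b_mem₃ hvB.2.1).symm ht.ne₁₂ ht.ne₁₃ ht.ne₂₃ hmeet ?_ ?_ ?_
  · intro x hx₁ hx₂
    obtain rfl := eq_of_mem_of_mem S.linear h₁ h₂ ht.ne₁₂ hx₁ hx₂ ht.a_mem₁ ht.a_mem₂
    exact ⟨hvA.1, hvB.1, ht.a_not_mem⟩
  · intro x hx₁ hx₃
    obtain rfl := eq_of_mem_of_mem S.linear h₁ h₃ ht.ne₁₃ hx₁ hx₃ ht.b_mem₁ ht.b_mem₃
    exact ⟨hvA.2.1, hvB.2.1⟩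
  · intro x hx₂ hx₃
    obtain rfl := eq_of_mem_of_mem S.linear h₂ h₃ ht.ne₂₃ hx₂ hx₃ ht.c_mem₂ ht.c_mem₃
    exact ⟨hvA.2.2, hvB.2.2⟩

lemma onPencil_or_onPencil (S : PencilSetting L q m₁ m₂ m₃) (ht : IsTriangle l₁ l₂ l₃ a b c)
    (h₁ : l₁ ∈ L) (h₂ : l₂ ∈ L) (h₃ : l₃ ∈ L) (hq₁ : q ∉ l₁) (hq₂ : q ∉ l₂) (hq₃ : q ∉ l₃) :
    OnPencil L q a ∨ OnPencil L q b := by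
  by_contra! ⟨ha, hb⟩
  obtain ⟨m, hm, m', hm', hqm, hqm', hmm', hcm, hcm'⟩ :=
    S.exists_two_not_mem (ne_of_mem_of_not_mem ht.c_mem₂ hq₂)
  refine S.false_of_triangle_pair ht h₁ h₂ h₃ hm hm' hmm'
    ⟨fun h => ha ⟨m, hm, hqm, h⟩, fun h => hb ⟨m, hm, hqm, h⟩, hcm⟩
    ⟨fun h => ha ⟨m', hm', hqm', h⟩, fun h => hb ⟨m', hm', hqm', h⟩, hcm'⟩ fun x hx hx' => ?_
  obtain rfl := eq_of_mem_of_mem S.linear hm hm' hmm' hx hx' hqm hqm'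
  exact ⟨hq₁, hq₂, hq₃⟩

lemma mem_or_mem_or_mem_of_avoiders (S : PencilSetting L q m₁ m₂ m₃)
    (ht : IsTriangle l₁ l₂ l₃ a b c) (h₁ : l₁ ∈ L) (h₂ : l₂ ∈ L) (h₃ : l₃ ∈ L)
    {e f : Finset α} (he : e ∈ L) (hf : f ∈ L) (hef : e ≠ f) (hve : a ∉ e ∧ b ∉ e ∧ c ∉ e)
    (hvf : a ∉ f ∧ b ∉ f ∧ c ∉ f) {x : α} (hxe : x ∈ e) (hxf : x ∈ f) :
    x ∈ l₁ ∨ x ∈ l₂ ∨ x ∈ l₃ := by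
  by_contra! h
  refine S.false_of_triangle_pair ht h₁ h₂ h₃ he hf hef hve hvf fun y hye hyf => ?_
  obtain rfl := eq_of_mem_of_mem S.linear he hf hef hye hyf hxe hxf
  exact h

lemma eq_or_eq_of_onPencil (S : PencilSetting L q m₁ m₂ m₃) {x : α} (hx : OnPencil L q x)
    {l l' l'' : Finset α} (hl : l ∈ L) (hl' : l' ∈ L) (hl'' : l'' ∈ L) (hll' : l ≠ l')
    (hql : q ∉ l) (hql' : q ∉ l') (hql'' : q ∉ l'') (hxl : x ∈ l) (hxl' : x ∈ l')
    (hxl'' : x ∈ l'') : l'' = l ∨ l'' = l' := by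
  obtain ⟨m, hm, hqm, hxm⟩ := hx
  rcases eq_or_eq_or_eq_of_degree_le_three (S.degree_le x) hl hl' hm hl'' hll'
    (ne_of_mem_of_not_mem' hqm hql).symm (ne_of_mem_of_not_mem' hqm hql').symm hxl hxl' hxm hxl''
    with h | h | rfl
  exacts [Or.inl h, Or.inr h, absurd hqm hql'']

lemma false_of_three_avoiders (S : PencilSetting L q m₁ m₂ m₃)
    (hmeet : ∀ l ∈ L, ∀ l' ∈ L, q ∉ l → q ∉ l' → l ≠ l' → ∃ x ∈ l, x ∈ l')
    (ht : IsTriangle l₁ l₂ l₃ a b c) (h₁ : l₁ ∈ L) (h₂ : l₂ ∈ L) (h₃ : l₃ ∈ L)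
    (hq₁ : q ∉ l₁) (hq₂ : q ∉ l₂) (hq₃ : q ∉ l₃) {e f g : Finset α} (he : e ∈ L) (hf : f ∈ L)
    (hg : g ∈ L) (hqe : q ∉ e) (hqf : q ∉ f) (hqg : q ∉ g) (hve : a ∉ e ∧ b ∉ e ∧ c ∉ e)
    (hvf : a ∉ f ∧ b ∉ f ∧ c ∉ f) (hvg : a ∉ g ∧ b ∉ g ∧ c ∉ g)
    (hef : e ≠ f) (heg : e ≠ g) (hfg : f ≠ g) : False := by
  -- the only lines through the meeting point of two avoiders are these and a side of the triangle
  have key {e f g : Finset α} (he : e ∈ L) (hf : f ∈ L) (hve : a ∉ e ∧ b ∉ e ∧ c ∉ e)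
      (hvf : a ∉ f ∧ b ∉ f ∧ c ∉ f) (hvg : a ∉ g ∧ b ∉ g ∧ c ∉ g) (hef : e ≠ f) (hge : g ≠ e)
      (hgf : g ≠ f) (hqe : q ∉ e) (hqf : q ∉ f) (hg : g ∈ L) {x : α} (hxe : x ∈ e)
      (hxf : x ∈ f) : ¬OnPencil L q x ∧ x ∉ g := by
    obtain ⟨l, hl, hql, hxl, hvl⟩ : ∃ l ∈ L, q ∉ l ∧ x ∈ l ∧ (a ∈ l ∨ b ∈ l ∨ c ∈ l) := by
      rcases S.mem_or_mem_or_mem_of_avoiders ht h₁ h₂ h₃ he hf hef hve hvf hxe hxf with h | h | h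
      exacts [⟨l₁, h₁, hq₁, h, Or.inl ht.a_mem₁⟩, ⟨l₂, h₂, hq₂, h, Or.inl ht.a_mem₂⟩,
        ⟨l₃, h₃, hq₃, h, Or.inr (Or.inl ht.b_mem₃)⟩]
    have hne {k : Finset α} (hvk : a ∉ k ∧ b ∉ k ∧ c ∉ k) : k ≠ l := by
      rintro rfl
      rcases hvl with h | h | h
      exacts [hvk.1 h, hvk.2.1 h, hvk.2.2 h]
    have through {k : Finset α} (hk : k ∈ L) (hxk : x ∈ k) : k = e ∨ k = f ∨ k = l :=
      eq_or_eq_or_eq_of_degree_le_three (S.degree_le x) he hf hl hk hef (hne hve) (hne hvf)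
        hxe hxf hxl hxk
    refine ⟨fun ⟨m, hm, hqm, hxm⟩ => ?_, fun hxg => ?_⟩
    · rcases through hm hxm with rfl | rfl | rfl
      exacts [hqe hqm, hqf hqm, hql hqm]
    · rcases through hg hxg with rfl | rfl | rfl
      exacts [hge rfl, hgf rfl, hne hvg rfl]
  obtain ⟨x, hxe, hxf⟩ := hmeet e he f hf hqe hqf hef
  obtain ⟨y, hye, hyg⟩ := hmeet e he g hg hqe hqg heg
  obtain ⟨z, hzf, hzg⟩ := hmeet f hf g hg hqf hqg hfg
  have hx := key he hf hve hvf hvg hef heg.symm hfg.symm hqe hqf hg hxe hxf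
  have hy := key he hg hve hvg hvf heg hef.symm hfg hqe hqg hf hye hyg
  have hz := key hf hg hvf hvg hve hfg hef heg hqf hqg he hzf hzg
  rcases S.onPencil_or_onPencil ⟨hxe, hxf, hye, hyg, hzf, hzg, hx.2, hy.2, hz.2⟩ he hf hg
    hqe hqf hqg with h | h
  exacts [hx.1 h, hy.1 h]

lemma eq_or_mem_or_avoids (S : PencilSetting L q m₁ m₂ m₃) (ht : IsTriangle l₁ l₂ l₃ a b c)
    (h₁ : l₁ ∈ L) (h₂ : l₂ ∈ L) (h₃ : l₃ ∈ L) (hq₁ : q ∉ l₁) (hq₂ : q ∉ l₂) (hq₃ : q ∉ l₃)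
    (ha : OnPencil L q a) (hb : OnPencil L q b) {l : Finset α} (hl : l ∈ L) (hql : q ∉ l) :
    l = l₁ ∨ l = l₂ ∨ l = l₃ ∨ c ∈ l ∨ (a ∉ l ∧ b ∉ l ∧ c ∉ l) := by
  by_cases hal : a ∈ l
  · rcases S.eq_or_eq_of_onPencil ha h₁ h₂ hl ht.ne₁₂ hq₁ hq₂ hql ht.a_mem₁ ht.a_mem₂ hal
      with h | h
    exacts [Or.inl h, Or.inr (Or.inl h)]
  by_cases hbl : b ∈ l
  · rcases S.eq_or_eq_of_onPencil hb h₁ h₃ hl ht.ne₁₃ hq₁ hq₃ hql ht.b_mem₁ ht.b_mem₃ hbl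
      with h | h
    exacts [Or.inl h, Or.inr (Or.inr (Or.inl h))]
  by_cases hcl : c ∈ l
  exacts [Or.inr (Or.inr (Or.inr (Or.inl hcl))),
    Or.inr (Or.inr (Or.inr (Or.inr ⟨hal, hbl, hcl⟩)))]

lemma six_le_card_far (ht : IsTriangle l₁ l₂ l₃ a b c)
    (h₁ : l₁ ∈ L) (h₂ : l₂ ∈ L) (h₃ : l₃ ∈ L) (hq₁ : q ∉ l₁) (hq₂ : q ∉ l₂) (hq₃ : q ∉ l₃)
    {e f g : Finset α} (he : e ∈ L) (hf : f ∈ L) (hg : g ∈ L) (hqe : q ∉ e) (hqf : q ∉ f)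
    (hqg : q ∉ g) (hve : a ∉ e ∧ b ∉ e ∧ c ∉ e) (hvf : a ∉ f ∧ b ∉ f ∧ c ∉ f) (hef : e ≠ f)
    (hcg : c ∈ g) (hg₂ : g ≠ l₂) (hg₃ : g ≠ l₃) : 6 ≤ (L.filter (q ∉ ·)).card := by
  have h₁e := ne_of_mem_of_not_mem' ht.a_mem₁ hve.1
  have h₂e := ne_of_mem_of_not_mem' ht.a_mem₂ hve.1
  have h₃e := ne_of_mem_of_not_mem' ht.b_mem₃ hve.2.1
  have h₁f := ne_of_mem_of_not_mem' ht.a_mem₁ hvf.1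
  have h₂f := ne_of_mem_of_not_mem' ht.a_mem₂ hvf.1
  have h₃f := ne_of_mem_of_not_mem' ht.b_mem₃ hvf.2.1
  have hge := ne_of_mem_of_not_mem' hcg hve.2.2
  have hgf := ne_of_mem_of_not_mem' hcg hvf.2.2
  have hg₁ := ne_of_mem_of_not_mem' hcg ht.c_not_mem
  have hsix : ({l₁, l₂, l₃, e, f, g} : Finset (Finset α)).card = 6 := by
    rw [card_insert_of_notMem (by simp [ht.ne₁₂, ht.ne₁₃, h₁e, h₁f, hg₁.symm]),
      card_insert_of_notMem (by simp [ht.ne₂₃, h₂e, h₂f, hg₂.symm]),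
      card_insert_of_notMem (by simp [h₃e, h₃f, hg₃.symm]),
      card_insert_of_notMem (by simp [hef, hge.symm]),
      card_insert_of_notMem (by simp [hgf.symm]), card_singleton]
  have hfar : ({l₁, l₂, l₃, e, f, g} : Finset (Finset α)) ⊆ L.filter (q ∉ ·) := by
    intro l hl
    simp only [mem_insert, mem_singleton] at hl
    rcases hl with rfl | rfl | rfl | rfl | rfl | rfl <;> exact mem_filter.2 ⟨‹_›, ‹_›⟩
  exact hsix ▸ card_le_card hfar

lemma hasSmallFarCover_of_two_avoiders (S : PencilSetting L q m₁ m₂ m₃)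
    (hmeet : ∀ l ∈ L, ∀ l' ∈ L, q ∉ l → q ∉ l' → l ≠ l' → ∃ x ∈ l, x ∈ l')
    (ht : IsTriangle l₁ l₂ l₃ a b c) (h₁ : l₁ ∈ L) (h₂ : l₂ ∈ L) (h₃ : l₃ ∈ L)
    (hq₁ : q ∉ l₁) (hq₂ : q ∉ l₂) (hq₃ : q ∉ l₃) (ha : OnPencil L q a) (hb : OnPencil L q b)
    {e f : Finset α} (he : e ∈ L) (hf : f ∈ L) (hqe : q ∉ e) (hqf : q ∉ f)
    (hve : a ∉ e ∧ b ∉ e ∧ c ∉ e) (hvf : a ∉ f ∧ b ∉ f ∧ c ∉ f) (hef : e ≠ f) :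
    HasSmallFarCover L q := by
  have classify {l : Finset α} (hl : l ∈ L) (hql : q ∉ l) :=
    S.eq_or_mem_or_avoids ht h₁ h₂ h₃ hq₁ hq₂ hq₃ ha hb hl hql
  obtain ⟨x, hxe, hxf⟩ := hmeet e he f hf hqe hqf hef
  have hx : ∀ l ∈ L, q ∉ l → (a ∉ l ∧ b ∉ l ∧ c ∉ l) → x ∈ l := by
    intro l hl hql hvl
    by_contra hxl
    exact S.false_of_three_avoiders hmeet ht h₁ h₂ h₃ hq₁ hq₂ hq₃ he hf hl hqe hqf hql hve hvf
      hvl hef (ne_of_mem_of_not_mem' hxe hxl) (ne_of_mem_of_not_mem' hxf hxl)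
  by_cases hg : ∃ g ∈ L, q ∉ g ∧ c ∈ g ∧ g ≠ l₂ ∧ g ≠ l₃
  · obtain ⟨g, hg, hqg, hcg, hg₂, hg₃⟩ := hg
    refine .of_three (s := x) (t := b) (w := c) (fun l hl hql => ?_) h₁ h₂ hq₁ hq₂ ht.ne₁₂ ?_
    · rcases classify hl hql with rfl | rfl | rfl | hcl | hvl
      exacts [Or.inr (Or.inl ht.b_mem₁), Or.inr (Or.inr ht.c_mem₂), Or.inr (Or.inl ht.b_mem₃),
        Or.inr (Or.inr hcl), Or.inl (hx l hl hql hvl)]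
    have := six_le_card_far ht h₁ h₂ h₃ hq₁ hq₂ hq₃ he hf hg hqe hqf hqg hve hvf hef hcg hg₂ hg₃
    have := S.linear l₁ h₁ l₂ h₂ ht.ne₁₂
    omega
  push Not at hg
  have hF : ∀ l ∈ L, q ∉ l → l = l₁ ∨ l = l₂ ∨ l = l₃ ∨ x ∈ l := by
    intro l hl hql
    rcases classify hl hql with h | h | h | hcl | hvl
    · exact Or.inl h
    · exact Or.inr (Or.inl h)
    · exact Or.inr (Or.inr (Or.inl h))
    · by_cases h₂l : l = l₂
      · exact Or.inr (Or.inl h₂l)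
      · exact Or.inr (Or.inr (Or.inl (hg l hl hql hcl h₂l)))
    · exact Or.inr (Or.inr (Or.inr (hx l hl hql hvl)))
  rcases S.mem_or_mem_or_mem_of_avoiders ht h₁ h₂ h₃ he hf hef hve hvf hxe hxf
    with hx₁ | hx₂ | hx₃
  · refine .of_two (s := x) (t := c) fun l hl hql => ?_
    rcases hF l hl hql with rfl | rfl | rfl | h
    exacts [Or.inl hx₁, Or.inr ht.c_mem₂, Or.inr ht.c_mem₃, Or.inl h]
  · refine .of_two (s := x) (t := b) fun l hl hql => ?_
    rcases hF l hl hql with rfl | rfl | rfl | h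
    exacts [Or.inr ht.b_mem₁, Or.inl hx₂, Or.inr ht.b_mem₃, Or.inl h]
  · refine .of_two (s := x) (t := a) fun l hl hql => ?_
    rcases hF l hl hql with rfl | rfl | rfl | h
    exacts [Or.inr ht.a_mem₁, Or.inr ht.a_mem₂, Or.inl hx₃, Or.inl h]

lemma hasSmallFarCover_of_triangle (S : PencilSetting L q m₁ m₂ m₃)
    (hmeet : ∀ l ∈ L, ∀ l' ∈ L, q ∉ l → q ∉ l' → l ≠ l' → ∃ x ∈ l, x ∈ l')
    (ht : IsTriangle l₁ l₂ l₃ a b c) (h₁ : l₁ ∈ L) (h₂ : l₂ ∈ L) (h₃ : l₃ ∈ L)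
    (hq₁ : q ∉ l₁) (hq₂ : q ∉ l₂) (hq₃ : q ∉ l₃) (ha : OnPencil L q a) (hb : OnPencil L q b) :
    HasSmallFarCover L q := by
  have classify {l : Finset α} (hl : l ∈ L) (hql : q ∉ l) :=
    S.eq_or_mem_or_avoids ht h₁ h₂ h₃ hq₁ hq₂ hq₃ ha hb hl hql
  by_cases havoid : ∃ e ∈ L, q ∉ e ∧ a ∉ e ∧ b ∉ e ∧ c ∉ e
  swap
  · refine .of_two (s := b) (t := c) fun l hl hql => ?_
    rcases classify hl hql with rfl | rfl | rfl | hcl | hvl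
    exacts [Or.inl ht.b_mem₁, Or.inr ht.c_mem₂, Or.inl ht.b_mem₃, Or.inr hcl,
      absurd ⟨l, hl, hql, hvl⟩ havoid]
  obtain ⟨e, he, hqe, hve⟩ := havoid
  by_cases havoid' : ∃ f ∈ L, q ∉ f ∧ (a ∉ f ∧ b ∉ f ∧ c ∉ f) ∧ f ≠ e
  · obtain ⟨f, hf, hqf, hvf, hfe⟩ := havoid'
    exact S.hasSmallFarCover_of_two_avoiders hmeet ht h₁ h₂ h₃ hq₁ hq₂ hq₃ ha hb he hf hqe hqf
      hve hvf hfe.symm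
  push Not at havoid'
  obtain ⟨z, hze, hz₁⟩ := hmeet e he l₁ h₁ hqe hq₁ (ne_of_mem_of_not_mem' ht.a_mem₁ hve.1).symm
  refine .of_two (s := z) (t := c) fun l hl hql => ?_
  rcases classify hl hql with rfl | rfl | rfl | hcl | hvl
  exacts [Or.inl hz₁, Or.inr ht.c_mem₂, Or.inr ht.c_mem₃, Or.inr hcl,
    Or.inl (havoid' l hl hql hvl ▸ hze)]

lemma ne_of_disjoint (S : PencilSetting L q m₁ m₂ m₃) (hu : u ∈ L) (huv : Disjoint u v) :
    u ≠ v := by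
  rintro rfl
  obtain ⟨x, hx⟩ := S.nonempty u hu
  exact disjoint_left.1 huv hx hx

lemma exists_onPencil_mem_inter (S : PencilSetting L q m₁ m₂ m₃) {w : Finset α} (hu : u ∈ L)
    (hv : v ∈ L) (hw : w ∈ L) (hqu : q ∉ u) (hqv : q ∉ v) (hqw : q ∉ w) (huv : Disjoint u v)
    (hwu : w ≠ u) (hwv : w ≠ v) : ∃ x ∈ u, x ∈ w ∧ OnPencil L q x := by
  obtain ⟨m, hm, m', hm', hqm, hqm', hmm', hvw⟩ : ∃ m ∈ L, ∃ m' ∈ L, q ∈ m ∧ q ∈ m' ∧ m ≠ m' ∧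
      ∀ y ∈ v, y ∈ w → y ∉ m ∧ y ∉ m' := by
    by_cases h : ∃ y ∈ v, y ∈ w
    · obtain ⟨y, hyv, hyw⟩ := h
      obtain ⟨m, hm, m', hm', hqm, hqm', hmm', hym, hym'⟩ :=
        S.exists_two_not_mem (ne_of_mem_of_not_mem hyv hqv)
      refine ⟨m, hm, m', hm', hqm, hqm', hmm', fun y' hy'v hy'w => ?_⟩
      obtain rfl := eq_of_mem_of_mem S.linear hv hw hwv.symm hy'v hy'w hyv hyw
      exact ⟨hym, hym'⟩
    · push Not at h
      exact ⟨m₁, S.mem₁, m₂, S.mem₂, S.q_mem₁, S.q_mem₂, S.ne₁₂,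
        fun y hyv hyw => absurd hyw (h y hyv)⟩
  by_contra! h
  have not_q {x : α} (hxm : x ∈ m) (hxm' : x ∈ m') : x = q :=
    eq_of_mem_of_mem S.linear hm hm' hmm' hxm hxm' hqm hqm'
  refine S.false_of_pair_triple hu hv hw hm hm' (S.ne_of_disjoint hu huv) hwu.symm
    (ne_of_mem_of_not_mem' hqm hqu).symm (ne_of_mem_of_not_mem' hqm' hqu).symm hwv.symm
    (ne_of_mem_of_not_mem' hqm hqv).symm (ne_of_mem_of_not_mem' hqm' hqv).symm
    (ne_of_mem_of_not_mem' hqm hqw).symm (ne_of_mem_of_not_mem' hqm' hqw).symm hmm'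
    (fun x hxu hxv => absurd hxv (disjoint_left.1 huv hxu)) ?_ ?_ ?_
  · intro x hxw hxm
    exact ⟨fun hxu => h x hxu hxw ⟨m, hm, hqm, hxm⟩, fun hxv => (hvw x hxv hxw).1 hxm,
      fun hxm' => hqw (not_q hxm hxm' ▸ hxw)⟩
  · intro x hxw hxm'
    exact ⟨fun hxu => h x hxu hxw ⟨m', hm', hqm', hxm'⟩, fun hxv => (hvw x hxv hxw).2 hxm'⟩
  · intro x hxm hxm'
    obtain rfl := not_q hxm hxm'
    exact ⟨hqu, hqv⟩

lemma not_mem_of_mem_inter (S : PencilSetting L q m₁ m₂ m₃) {w w' : Finset α} (hu : u ∈ L)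
    (hv : v ∈ L) (hw : w ∈ L) (hw' : w' ∈ L) (hqu : q ∉ u) (hqv : q ∉ v) (hqw : q ∉ w)
    (hqw' : q ∉ w') (huv : Disjoint u v) (hwu : w ≠ u) (hwv : w ≠ v) (hw'u : w' ≠ u)
    (hww' : w ≠ w') {x : α} (hxw : x ∈ w) (hxw' : x ∈ w') : x ∉ u := by
  intro hxu
  obtain ⟨y, hyu, hyw, hy⟩ := S.exists_onPencil_mem_inter hu hv hw hqu hqv hqw huv hwu hwv
  obtain rfl := eq_of_mem_of_mem S.linear hu hw hwu.symm hyu hyw hxu hxw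
  rcases S.eq_or_eq_of_onPencil hy hu hw hw' hwu.symm hqu hqw hqw' hyu hyw hxw' with h | h
  exacts [hw'u h, hww' h.symm]

lemma exists_mem_of_three (S : PencilSetting L q m₁ m₂ m₃) {w₁ w₂ w₃ : Finset α} (hu : u ∈ L)
    (hv : v ∈ L) (h₁ : w₁ ∈ L) (h₂ : w₂ ∈ L) (h₃ : w₃ ∈ L) (hqu : q ∉ u) (hqv : q ∉ v)
    (hq₁ : q ∉ w₁) (hq₂ : q ∉ w₂) (hq₃ : q ∉ w₃) (huv : Disjoint u v)
    (h₁u : w₁ ≠ u) (h₁v : w₁ ≠ v) (h₂u : w₂ ≠ u) (h₂v : w₂ ≠ v) (h₃u : w₃ ≠ u) (h₃v : w₃ ≠ v)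
    (h₁₂ : w₁ ≠ w₂) (h₁₃ : w₁ ≠ w₃) (h₂₃ : w₂ ≠ w₃) : ∃ z ∈ w₁, z ∈ w₂ ∧ z ∈ w₃ := by
  by_contra! h
  have notu {w w'} (hw : w ∈ L) (hw' : w' ∈ L) (hqw : q ∉ w) (hqw' : q ∉ w') (hwu : w ≠ u)
      (hwv : w ≠ v) (hw'u : w' ≠ u) (hw'v : w' ≠ v) (hww' : w ≠ w') (x : α) (hxw : x ∈ w)
      (hxw' : x ∈ w') : x ∉ u ∧ x ∉ v :=
    ⟨S.not_mem_of_mem_inter hu hv hw hw' hqu hqv hqw hqw' huv hwu hwv hw'u hww' hxw hxw',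
      S.not_mem_of_mem_inter hv hu hw hw' hqv hqu hqw hqw' huv.symm hwv hwu hw'v hww' hxw hxw'⟩
  refine S.false_of_pair_triple hu hv h₁ h₂ h₃ (S.ne_of_disjoint hu huv) h₁u.symm h₂u.symm
    h₃u.symm h₁v.symm h₂v.symm h₃v.symm h₁₂ h₁₃ h₂₃
    (fun x hxu hxv => absurd hxv (disjoint_left.1 huv hxu)) (fun x hx₁ hx₂ => ?_)
    (notu h₁ h₃ hq₁ hq₃ h₁u h₁v h₃u h₃v h₁₃) (notu h₂ h₃ hq₂ hq₃ h₂u h₂v h₃u h₃v h₂₃)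
  exact ⟨(notu h₁ h₂ hq₁ hq₂ h₁u h₁v h₂u h₂v h₁₂ x hx₁ hx₂).1,
    (notu h₁ h₂ hq₁ hq₂ h₁u h₁v h₂u h₂v h₁₂ x hx₁ hx₂).2, h x hx₁ hx₂⟩

lemma hasSmallFarCover_of_disjoint_of_three (S : PencilSetting L q m₁ m₂ m₃)
    {w₁ w₂ w₃ : Finset α} (hu : u ∈ L) (hv : v ∈ L) (hw₁ : w₁ ∈ L) (hw₂ : w₂ ∈ L)
    (hw₃ : w₃ ∈ L) (hqu : q ∉ u) (hqv : q ∉ v) (hq₁ : q ∉ w₁) (hq₂ : q ∉ w₂) (hq₃ : q ∉ w₃)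
    (huv : Disjoint u v) (h₁u : w₁ ≠ u) (h₁v : w₁ ≠ v) (h₂u : w₂ ≠ u) (h₂v : w₂ ≠ v)
    (h₃u : w₃ ≠ u) (h₃v : w₃ ≠ v) (h₁₂ : w₁ ≠ w₂) (h₁₃ : w₁ ≠ w₃) (h₂₃ : w₂ ≠ w₃) :
    HasSmallFarCover L q := by
  obtain ⟨s, hs⟩ := S.nonempty u hu
  obtain ⟨t, ht⟩ := S.nonempty v hv
  obtain ⟨z, hz₁, hz₂, -⟩ := S.exists_mem_of_three hu hv hw₁ hw₂ hw₃ hqu hqv hq₁ hq₂ hq₃ huv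
    h₁u h₁v h₂u h₂v h₃u h₃v h₁₂ h₁₃ h₂₃
  -- every further far line passes through `z`, the only common point of `w₁` and `w₂`
  refine .of_three (s := z) (t := s) (w := t) (fun l hl hql => ?_) hu hv hqu hqv
    (S.ne_of_disjoint hu huv) ?_
  · by_cases hlu : l = u
    · exact Or.inr (Or.inl (hlu ▸ hs))
    by_cases hlv : l = v
    · exact Or.inr (Or.inr (hlv ▸ ht))
    by_cases hl₁ : l = w₁
    · exact Or.inl (hl₁ ▸ hz₁)
    by_cases hl₂ : l = w₂
    · exact Or.inl (hl₂ ▸ hz₂)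
    obtain ⟨z', hz'₁, hz'₂, hz'l⟩ := S.exists_mem_of_three hu hv hw₁ hw₂ hl hqu hqv hq₁ hq₂ hql
      huv h₁u h₁v h₂u h₂v hlu hlv h₁₂ (Ne.symm hl₁) (Ne.symm hl₂)
    obtain rfl := eq_of_mem_of_mem S.linear hw₁ hw₂ h₁₂ hz'₁ hz'₂ hz₁ hz₂
    exact Or.inl hz'l
  have hfive : ({u, v, w₁, w₂, w₃} : Finset (Finset α)).card = 5 := by
    rw [card_insert_of_notMem (by simp [S.ne_of_disjoint hu huv, h₁u.symm, h₂u.symm, h₃u.symm]),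
      card_insert_of_notMem (by simp [h₁v.symm, h₂v.symm, h₃v.symm]),
      card_insert_of_notMem (by simp [h₁₂, h₁₃]), card_insert_of_notMem (by simp [h₂₃]),
      card_singleton]
  have hfar : ({u, v, w₁, w₂, w₃} : Finset (Finset α)) ⊆ L.filter (q ∉ ·) := by
    intro l hl
    simp only [mem_insert, mem_singleton] at hl
    rcases hl with rfl | rfl | rfl | rfl | rfl <;> exact mem_filter.2 ⟨‹_›, ‹_›⟩
  rw [disjoint_iff_inter_eq_empty.1 huv, card_empty, zero_add, ← hfive]
  exact card_le_card hfar

lemma hasSmallFarCover_of_disjoint (S : PencilSetting L q m₁ m₂ m₃) (hu : u ∈ L) (hv : v ∈ L)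
    (hqu : q ∉ u) (hqv : q ∉ v) (huv : Disjoint u v) : HasSmallFarCover L q := by
  obtain ⟨s, hs⟩ := S.nonempty u hu
  obtain ⟨t, ht⟩ := S.nonempty v hv
  by_cases h₁ : ∃ w₁ ∈ L, q ∉ w₁ ∧ w₁ ≠ u ∧ w₁ ≠ v
  swap
  · push Not at h₁
    refine .of_two (s := s) (t := t) fun l hl hql => ?_
    by_cases hlu : l = u
    · exact Or.inl (hlu ▸ hs)
    · exact Or.inr (h₁ l hl hql hlu ▸ ht)
  obtain ⟨w₁, hw₁, hq₁, h₁u, h₁v⟩ := h₁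
  obtain ⟨x, hxu, hx₁, -⟩ := S.exists_onPencil_mem_inter hu hv hw₁ hqu hqv hq₁ huv h₁u h₁v
  by_cases h₂ : ∃ w₂ ∈ L, q ∉ w₂ ∧ w₂ ≠ u ∧ w₂ ≠ v ∧ w₂ ≠ w₁
  swap
  · push Not at h₂
    refine .of_two (s := x) (t := t) fun l hl hql => ?_
    by_cases hlu : l = u
    · exact Or.inl (hlu ▸ hxu)
    by_cases hlv : l = v
    · exact Or.inr (hlv ▸ ht)
    · exact Or.inl (h₂ l hl hql hlu hlv ▸ hx₁)
  obtain ⟨w₂, hw₂, hq₂, h₂u, h₂v, h₂₁⟩ := h₂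
  obtain ⟨y, hyv, hy₂, -⟩ := S.exists_onPencil_mem_inter hv hu hw₂ hqv hqu hq₂ huv.symm h₂v h₂u
  by_cases h₃ : ∃ w₃ ∈ L, q ∉ w₃ ∧ w₃ ≠ u ∧ w₃ ≠ v ∧ w₃ ≠ w₁ ∧ w₃ ≠ w₂
  swap
  · push Not at h₃
    refine .of_two (s := x) (t := y) fun l hl hql => ?_
    by_cases hlu : l = u
    · exact Or.inl (hlu ▸ hxu)
    by_cases hlv : l = v
    · exact Or.inr (hlv ▸ hyv)
    by_cases hl₁ : l = w₁
    · exact Or.inl (hl₁ ▸ hx₁)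
    · exact Or.inr (h₃ l hl hql hlu hlv hl₁ ▸ hy₂)
  obtain ⟨w₃, hw₃, hq₃, h₃u, h₃v, h₃₁, h₃₂⟩ := h₃
  exact S.hasSmallFarCover_of_disjoint_of_three hu hv hw₁ hw₂ hw₃ hqu hqv hq₁ hq₂ hq₃ huv h₁u h₁v
    h₂u h₂v h₃u h₃v h₂₁.symm h₃₁.symm h₃₂.symm

lemma hasSmallFarCover (S : PencilSetting L q m₁ m₂ m₃) : HasSmallFarCover L q := by
  by_cases hcommon : ∃ x, ∀ l ∈ L, q ∉ l → x ∈ l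
  · obtain ⟨x, hx⟩ := hcommon
    exact .of_two (s := x) (t := x) fun l hl hql => Or.inl (hx l hl hql)
  push Not at hcommon
  by_cases hdisj : ∃ u ∈ L, ∃ v ∈ L, q ∉ u ∧ q ∉ v ∧ Disjoint u v
  · obtain ⟨u, hu, v, hv, hqu, hqv, huv⟩ := hdisj
    exact S.hasSmallFarCover_of_disjoint hu hv hqu hqv huv
  have hmeet : ∀ l ∈ L, ∀ l' ∈ L, q ∉ l → q ∉ l' → l ≠ l' → ∃ x ∈ l, x ∈ l' := by
    intro l hl l' hl' hql hql' _
    by_contra! h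
    exact hdisj ⟨l, hl, l', hl', hql, hql', disjoint_left.2 h⟩
  obtain ⟨l₁, h₁, hq₁, -⟩ := hcommon q
  obtain ⟨s, hs⟩ := S.nonempty l₁ h₁
  obtain ⟨l₂, h₂, hq₂, hs₂⟩ := hcommon s
  obtain ⟨a, ha₁, ha₂⟩ := hmeet l₁ h₁ l₂ h₂ hq₁ hq₂ (ne_of_mem_of_not_mem' hs hs₂)
  obtain ⟨l₃, h₃, hq₃, ha₃⟩ := hcommon a
  obtain ⟨b, hb₁, hb₃⟩ := hmeet l₁ h₁ l₃ h₃ hq₁ hq₃ (ne_of_mem_of_not_mem' ha₁ ha₃)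
  obtain ⟨c, hc₂, hc₃⟩ := hmeet l₂ h₂ l₃ h₃ hq₂ hq₃ (ne_of_mem_of_not_mem' ha₂ ha₃)
  have h₁₂ := ne_of_mem_of_not_mem' hs hs₂
  have ht : IsTriangle l₁ l₂ l₃ a b c := by
    refine ⟨ha₁, ha₂, hb₁, hb₃, hc₂, hc₃, ha₃, fun hb₂ => ?_, fun hc₁ => ?_⟩
    · exact ha₃ (eq_of_mem_of_mem S.linear h₁ h₂ h₁₂ hb₁ hb₂ ha₁ ha₂ ▸ hb₃)
    · exact ha₃ (eq_of_mem_of_mem S.linear h₁ h₂ h₁₂ hc₁ hc₂ ha₁ ha₂ ▸ hc₃)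
  -- at most one vertex of the triangle is off the pencil; rotate it to `c`
  by_cases ha : OnPencil L q a
  · by_cases hb : OnPencil L q b
    · exact S.hasSmallFarCover_of_triangle hmeet ht h₁ h₂ h₃ hq₁ hq₂ hq₃ ha hb
    · have hc := (S.onPencil_or_onPencil ht.rotate h₃ h₁ h₂ hq₃ hq₁ hq₂).resolve_left hb
      exact S.hasSmallFarCover_of_triangle hmeet ht.swap h₂ h₁ h₃ hq₂ hq₁ hq₃ ha hc
  · have hb := (S.onPencil_or_onPencil ht h₁ h₂ h₃ hq₁ hq₂ hq₃).resolve_left ha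
    have hc := (S.onPencil_or_onPencil ht.swap h₂ h₁ h₃ hq₂ hq₁ hq₃).resolve_left ha
    exact S.hasSmallFarCover_of_triangle hmeet ht.rotate h₃ h₁ h₂ hq₃ hq₁ hq₂ hb hc

lemma inter_eq_singleton (S : PencilSetting L q m₁ m₂ m₃) {m m' : Finset α} (hm : m ∈ L)
    (hm' : m' ∈ L) (hmm' : m ≠ m') (hqm : q ∈ m) (hqm' : q ∈ m') : m ∩ m' = {q} :=
  eq_singleton_iff_unique_mem.2 ⟨mem_inter.2 ⟨hqm, hqm'⟩, fun _ hx =>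
    eq_of_mem_of_mem S.linear hm hm' hmm' (mem_inter.1 hx).1 (mem_inter.1 hx).2 hqm hqm'⟩

lemma card_union_pencil (S : PencilSetting L q m₁ m₂ m₃) (hunif : ∀ l ∈ L, l.card = r) :
    (m₁ ∪ m₂ ∪ m₃).card + 2 = 3 * r := by
  have h₁₂ := card_union_add_card_inter m₁ m₂
  have h₁₂₃ := card_union_add_card_inter (m₁ ∪ m₂) m₃
  rw [S.inter_eq_singleton S.mem₁ S.mem₂ S.ne₁₂ S.q_mem₁ S.q_mem₂] at h₁₂
  rw [union_inter_distrib_right, S.inter_eq_singleton S.mem₁ S.mem₃ S.ne₁₃ S.q_mem₁ S.q_mem₃,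
    S.inter_eq_singleton S.mem₂ S.mem₃ S.ne₂₃ S.q_mem₂ S.q_mem₃, union_self] at h₁₂₃
  rw [hunif _ S.mem₁, hunif _ S.mem₂, card_singleton] at h₁₂
  rw [hunif _ S.mem₃, card_singleton] at h₁₂₃
  omega

lemma card_inter_union_pencil_le (S : PencilSetting L q m₁ m₂ m₃) {l : Finset α} (hl : l ∈ L)
    (hql : q ∉ l) : (l ∩ (m₁ ∪ m₂ ∪ m₃)).card ≤ 3 := by
  have hlm {m} (hm : m ∈ L) (hqm : q ∈ m) : (l ∩ m).card ≤ 1 :=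
    S.linear l hl m hm (ne_of_mem_of_not_mem' hqm hql).symm
  rw [inter_union_distrib_left, inter_union_distrib_left]
  grw [card_union_le, card_union_le, hlm S.mem₁ S.q_mem₁, hlm S.mem₂ S.q_mem₂,
    hlm S.mem₃ S.q_mem₃]

lemma five_mul_le_card (S : PencilSetting L q m₁ m₂ m₃) (hsub : ∀ l ∈ L, l ⊆ P)
    (hunif : ∀ l ∈ L, l.card = r) (hu : u ∈ L) (hv : v ∈ L) (hqu : q ∉ u)
    (hqv : q ∉ v) : 5 * r ≤ P.card + 8 + (u ∩ v).card := by
  have hM := S.card_union_pencil hunif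
  have hMu := card_union_add_card_inter (m₁ ∪ m₂ ∪ m₃) u
  have hMuv := card_union_add_card_inter (m₁ ∪ m₂ ∪ m₃ ∪ u) v
  have hinter := card_union_le ((m₁ ∪ m₂ ∪ m₃) ∩ v) (u ∩ v)
  rw [← union_inter_distrib_right] at hinter
  have hu3 := S.card_inter_union_pencil_le hu hqu
  have hv3 := S.card_inter_union_pencil_le hv hqv
  rw [inter_comm] at hu3 hv3
  have hP : (m₁ ∪ m₂ ∪ m₃ ∪ u ∪ v).card ≤ P.card := card_le_card <| union_subset (union_subset
    (union_subset (union_subset (hsub _ S.mem₁) (hsub _ S.mem₂)) (hsub _ S.mem₃)) (hsub _ hu))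
    (hsub _ hv)
  rw [hunif u hu] at hMu
  rw [hunif v hv] at hMuv
  omega

lemma card_far_add_three_le (S : PencilSetting L q m₁ m₂ m₃) :
    (L.filter (q ∉ ·)).card + 3 ≤ L.card := by
  have hpencil : ({m₁, m₂, m₃} : Finset (Finset α)) ⊆ L.filter (q ∈ ·) := by
    intro m hm
    simp only [mem_insert, mem_singleton] at hm
    rcases hm with rfl | rfl | rfl
    exacts [mem_filter.2 ⟨S.mem₁, S.q_mem₁⟩, mem_filter.2 ⟨S.mem₂, S.q_mem₂⟩,
      mem_filter.2 ⟨S.mem₃, S.q_mem₃⟩]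
  have h3 := card_le_card hpencil
  rw [card_eq_three.2 ⟨m₁, m₂, m₃, S.ne₁₂, S.ne₁₃, S.ne₂₃, rfl⟩] at h3
  have := card_filter_add_card_filter_not (s := L) (q ∈ ·)
  omega

end PencilSetting

lemma tau_le_card_add_one_of_farCover {P : Finset α} {L : Finset (Finset α)} {q : α}
    {T : Finset α} (hsub : ∀ l ∈ L, l ⊆ P) (hqP : q ∈ P) (hT : FarCover L q T) :
    tau P L ≤ T.card + 1 := by
  have htrans : IsTransversal P L (insert q (T.filter (· ∈ P))) := by
    refine ⟨insert_subset hqP fun _ hx => (mem_filter.1 hx).2, fun l hl => ?_⟩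
    by_cases hql : q ∈ l
    · exact ⟨q, mem_inter.2 ⟨mem_insert_self _ _, hql⟩⟩
    · obtain ⟨x, hxT, hxl⟩ := hT l hl hql
      exact ⟨x, mem_inter.2 ⟨mem_insert_of_mem (mem_filter.2 ⟨hxT, hsub l hl hxl⟩), hxl⟩⟩
  calc tau P L ≤ _ := tau_le_card htrans
    _ ≤ (T.filter (· ∈ P)).card + 1 := card_insert_le _ _
    _ ≤ T.card + 1 := by grw [card_filter_le]

lemma exists_pencilSetting {P : Finset α} {L : Finset (Finset α)}
    (hLS : IsLinearSystem P L) (hν : nu2 L = 4) (hΔ : maxDegree P L = 3) :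
    ∃ q ∈ P, ∃ m₁ m₂ m₃, PencilSetting L q m₁ m₂ m₃ := by
  obtain ⟨hne, hsub, hlin⟩ := hLS
  have hP : P.Nonempty := nonempty_iff_ne_empty.2 fun h => by simp [maxDegree, h] at hΔ
  obtain ⟨q, hqP, hq⟩ := exists_mem_eq_sup P hP (degree L)
  obtain ⟨m₁, m₂, m₃, h₁₂, h₁₃, h₂₃, hpencil⟩ :=
    card_eq_three.1 (show degree L q = 3 from hq ▸ hΔ)
  have hm {m} (hm : m ∈ ({m₁, m₂, m₃} : Finset (Finset α))) : m ∈ L ∧ q ∈ m :=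
    mem_filter.1 (hpencil ▸ hm)
  refine ⟨q, hqP, m₁, m₂, m₃, ⟨hne, hlin, fun x => hΔ ▸ degree_le_maxDegree hsub x,
    fun R hR => hν ▸ card_le_nu2 hR, (hm ?_).1, (hm ?_).1, (hm ?_).1, (hm ?_).2, (hm ?_).2,
    (hm ?_).2, h₁₂, h₁₃, h₂₃⟩⟩ <;> simp

end

theorem stmt10_general {α : Type*} [DecidableEq α] (P : Finset α) (L : Finset (Finset α))
    (r : ℕ) (hLS : IsLinearSystem P L)
    (huniform : ∀ l ∈ L, l.card = r) (hν : nu2 L = 4) (hΔ : maxDegree P L = 3) :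
    (r + 1) * tau P L ≤ P.card + L.card := by
  obtain ⟨q, hqP, m₁, m₂, m₃, S⟩ := exists_pencilSetting hLS hν hΔ
  have hsub := hLS.2.1
  have hL := nu2_lt_card_of_concurrent S.mem₁ S.mem₂ S.mem₃ S.ne₁₂ S.ne₁₃ S.ne₂₃ S.q_mem₁
    S.q_mem₂ S.q_mem₃
  rw [hν] at hL
  have hM := S.card_union_pencil huniform
  have hMP : (m₁ ∪ m₂ ∪ m₃).card ≤ P.card :=
    card_le_card (union_subset (union_subset (hsub _ S.mem₁) (hsub _ S.mem₂)) (hsub _ S.mem₃))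
  have hinc : L.card * r ≤ P.card * 3 :=
    card_mul_le_mul_card hsub huniform fun x _ => S.degree_le x
  obtain ⟨T, hT, hsmall⟩ := S.hasSmallFarCover
  have hτ := tau_le_card_add_one_of_farCover hsub hqP hT
  rcases hsmall with hT2 | ⟨hT3, u, hu, v, hv, hqu, hqv, -, hfar⟩
  · calc (r + 1) * tau P L ≤ (r + 1) * 3 := Nat.mul_le_mul_left _ (by omega)
      _ ≤ P.card + L.card := by omega
  · have h5 := S.five_mul_le_card hsub huniform hu hv hqu hqv
    have h3 := S.card_far_add_three_le
    calc (r + 1) * tau P L ≤ (r + 1) * 4 := Nat.mul_le_mul_left _ (by omega)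
      _ ≤ P.card + L.card := by
        rcases le_or_gt r 3 with hr | hr
        · interval_cases r <;> omega
        · omega

/-- Any `r`-uniform linear system (`r ≥ 2`) with `ν₂ = 4` and `Δ = 3`
satisfies `(r+1)·τ ≤ |P| + |ℒ|`. -/
theorem stmt10 {α : Type*} [DecidableEq α] (P : Finset α) (L : Finset (Finset α))
    (r : ℕ) (hr : 2 ≤ r) (hLS : IsLinearSystem P L)
    (huniform : ∀ l ∈ L, l.card = r) (hν : nu2 L = 4) (hΔ : maxDegree P L = 3) :
    (r + 1) * tau P L ≤ P.card + L.card :=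
  stmt10_general P L r hLS huniform hν hΔ
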